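/- Let C = conv{γ₁, γ₂} ⊂ ℝ³ with γ₁(s) = (−s, −s², −s³) for s ∈ [0,1] and γ₂(t) = (−t, t², 0) for t ∈ [0, (2+√7)/3], and let K = cone(C × {1}) ⊂ ℝ⁴. Then the tangent cone to K at the origin, T(0;K) = cl cone{κ₁ ∪ κ₂} with κ₁(s) = (−1, −s, −s²) and κ₂(t) = (−1, t, 0) (after rescaling), is not facially exposed: its slice conv{(−s, −s²) : s ∈ [0,1]} ∪ {(−1,t,0) : t ∈ [0,(2+√7)/3]} (in the plane of the first slice coordinates) has {(0,0)} as an unexposed face. In particular, K is not strongly tangentially exposed. -/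

import Mathlib

/- Common definitions following "Facially Dual Complete (Nice) cones and
lexicographic tangents" by V. Roshchina and L. Tunçel. -/

open Set Filter
open scoped Pointwise

local notation "⟪" x ", " y "⟫" => @inner ℝ _ _ x y

variable {E : Type*} [NormedAddCommGroup E] [InnerProductSpace ℝ E]

/-- The tangent cone to a set `C` at `x`: the closure of the cone of feasible
directions `{d : x + ε • d ∈ C for some ε > 0}`. -/
def TangCone (x : E) (C : Set E) : Set E :=
  closure {d : E | ∃ ε : ℝ, 0 < ε ∧ x + ε • d ∈ C}

/-- `F` is a face of the convex set `C`: a closed convex subset such that any open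
segment of `C` whose interior meets `F` has both endpoints in `F`. -/
def IsFaceOf (F C : Set E) : Prop :=
  F ⊆ C ∧ Convex ℝ F ∧ IsClosed F ∧
    ∀ x ∈ F, ∀ y ∈ C, ∀ z ∈ C, x ∈ openSegment ℝ y z → y ∈ F ∧ z ∈ F

/-- A proper face: a nonempty face different from the whole set. -/
def IsProperFaceOf (F C : Set E) : Prop := IsFaceOf F C ∧ F.Nonempty ∧ F ≠ C

/-- The dual cone `K* = {s : ⟨s,x⟩ ≥ 0 for all x ∈ K}`. -/
def DualCone' (K : Set E) : Set E := {s : E | ∀ x ∈ K, 0 ≤ ⟪s, x⟫}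

/-- `F^⊥ = {s : ⟨s,x⟩ = 0 for all x ∈ F}`. -/
def PerpOf (F : Set E) : Set E := {s : E | ∀ x ∈ F, ⟪s, x⟫ = 0}

/-- Facial dual completeness: `K* + F^⊥` is closed for every proper face `F` of `K`. -/
def IsFDC (K : Set E) : Prop :=
  ∀ F : Set E, IsProperFaceOf F K → IsClosed (DualCone' K + PerpOf F)

/-- Tangential exposure: `T(x;C) ∩ span F = T(x;F)` for every proper face `F` and `x ∈ F`. -/
def TangentiallyExposed (C : Set E) : Prop :=
  ∀ F : Set E, IsProperFaceOf F C → ∀ x ∈ F,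
    TangCone x C ∩ (Submodule.span ℝ F : Set E) = TangCone x F

/-- The family of all tangent cones of members of a family of sets. -/
def TangFamily (𝒦 : Set (Set E)) : Set (Set E) :=
  {T | ∃ C ∈ 𝒦, ∃ x ∈ C, T = TangCone x C}

/-- `𝒯^k(C)`: the `k`-fold iterated tangent-cone families of `C`;
its members are the lexicographic tangent cones (of order `k`) of `C`. -/
def TangIter (C : Set E) : ℕ → Set (Set E)
  | 0 => {C}
  | k + 1 => TangFamily (TangIter C k)

/-- Strong tangential exposure: `C` and all of its lexicographic tangent cones are
tangentially exposed. -/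
def StronglyTangentiallyExposed (C : Set E) : Prop :=
  ∀ k : ℕ, ∀ T ∈ TangIter C k, TangentiallyExposed T

/-- `F` is an exposed face of `C`: the set of maximizers over `C` of some linear functional. -/
def IsExposedFaceOf (F C : Set E) : Prop :=
  ∃ p : E, F = {x ∈ C | ∀ y ∈ C, ⟪p, y⟫ ≤ ⟪p, x⟫}

/-- `C` is facially exposed: every proper face of `C` is exposed. -/
def FaciallyExposed (C : Set E) : Prop :=
  ∀ F : Set E, IsProperFaceOf F C → IsExposedFaceOf F C

/-- The normal cone to `C` at `x`. -/
def NormalCone' (x : E) (C : Set E) : Set E := {s : E | ∀ y ∈ C, ⟪s, y - x⟫ ≤ 0}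

/-- The minimal face of `C` containing `S`. -/
def MinimalFace (S C : Set E) : Set E := ⋂₀ {F : Set E | IsFaceOf F C ∧ S ⊆ F}

/-- `K` is a cone: closed under positive scalar multiplication. -/
def IsConeSet (K : Set E) : Prop := ∀ c : ℝ, 0 < c → ∀ x ∈ K, c • x ∈ K

noncomputable section CubicExample

/-- Shorthand for vectors in `ℝ³`. -/
def v3 (a b c : ℝ) : EuclideanSpace ℝ (Fin 3) := WithLp.toLp 2 ![a, b, c]

/-- Shorthand for vectors in `ℝ⁴`. -/
def v4 (a b c d : ℝ) : EuclideanSpace ℝ (Fin 4) := WithLp.toLp 2 ![a, b, c, d]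

/-- The twisted cubic piece `γ₁(s) = (−s, −s², −s³)`. -/
def γ₁ (s : ℝ) : EuclideanSpace ℝ (Fin 3) := v3 (-s) (-s ^ 2) (-s ^ 3)

/-- The parabola piece `γ₂(t) = (−t, t², 0)`. -/
def γ₂ (t : ℝ) : EuclideanSpace ℝ (Fin 3) := v3 (-t) (t ^ 2) 0

/-- `C = conv{γ₁, γ₂}` with `s ∈ [0,1]`, `t ∈ [0, (2+√7)/3]`. -/
def Cset : Set (EuclideanSpace ℝ (Fin 3)) :=
  convexHull ℝ (γ₁ '' Icc 0 1 ∪ γ₂ '' Icc 0 ((2 + Real.sqrt 7) / 3))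

/-- The lifting `p ↦ (p, 1)` of `ℝ³` into `ℝ⁴`. -/
def lift (p : EuclideanSpace ℝ (Fin 3)) : EuclideanSpace ℝ (Fin 4) :=
  v4 (p 0) (p 1) (p 2) 1

/-- `K = cone(C × {1})`, the closed conic hull. -/
def Kcone : Set (EuclideanSpace ℝ (Fin 4)) :=
  closure {v | ∃ c : ℝ, 0 ≤ c ∧ ∃ p ∈ Cset, v = c • lift p}

/-- `F₂ = conv{γ₂}`, a face of `C`. -/
def F₂ : Set (EuclideanSpace ℝ (Fin 3)) :=
  convexHull ℝ (γ₂ '' Icc 0 ((2 + Real.sqrt 7) / 3))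

/-- `F = cone(F₂ × {1})`, the corresponding face of `K`. -/
def Fface : Set (EuclideanSpace ℝ (Fin 4)) :=
  closure {v | ∃ c : ℝ, 0 ≤ c ∧ ∃ p ∈ F₂, v = c • lift p}

/-- The polar cone `K° = −K*`. -/
def Kpolar : Set (EuclideanSpace ℝ (Fin 4)) := {s | ∀ x ∈ Kcone, ⟪s, x⟫ ≤ 0}

/-- Shorthand for vectors in `ℝ²`. -/
def v2 (a b : ℝ) : EuclideanSpace ℝ (Fin 2) := WithLp.toLp 2 ![a, b]

/-- The rescaled curve `κ₁(s) = (−1, −s, −s²)`. -/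
def κ₁ (s : ℝ) : EuclideanSpace ℝ (Fin 3) := v3 (-1) (-s) (-s ^ 2)

/-- The rescaled curve `κ₂(t) = (−1, t, 0)`. -/
def κ₂ (t : ℝ) : EuclideanSpace ℝ (Fin 3) := v3 (-1) t 0

/-- `cl cone{κ₁ ∪ κ₂}`, the closed conic hull of the two rescaled curves. -/
def Tcone : Set (EuclideanSpace ℝ (Fin 3)) :=
  closure {v | ∃ c : ℝ, 0 ≤ c ∧
    ∃ p ∈ convexHull ℝ (κ₁ '' Icc 0 1 ∪ κ₂ '' Icc 0 ((2 + Real.sqrt 7) / 3)), v = c • p}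

/-- The slice of `Tcone` (at first coordinate `−1`), written in the remaining two
coordinates: `conv({(−s, −s²) : s ∈ [0,1]} ∪ {(t, 0) : t ∈ [0, (2+√7)/3]})`. -/
def Dslice : Set (EuclideanSpace ℝ (Fin 2)) :=
  convexHull ℝ ({q | ∃ s ∈ Icc (0 : ℝ) 1, q = v2 (-s) (-s ^ 2)} ∪
    {q | ∃ t ∈ Icc (0 : ℝ) ((2 + Real.sqrt 7) / 3), q = v2 t 0})

/-!
Every set of the example lies in the closed convex cone `{(u, v, w) | u, w ≤ 0, v ≥ -√(u w)}`
(read through three of its coordinates, or through the slice `u = -1`), whose boundary contains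
the curve `(-1, -s, -s²)`. Hence, with coordinates indexed from `0`, cutting `T(0; C)` by the
supporting plane `x₂ = 0` and then by `x₁ = 0` leaves the ray through `(-1, 0, 0)` as a face of a
face, and the same two cuts of the slice leave the face `{0}`. Neither face is exposed: the curve
leaves the face tangentially, in the direction opposite to `κ₂ 1 - κ₁ 0` (resp. to `(1, 0)`), so a
functional maximal on the face is at least as large at `κ₂ 1` (resp. `(1, 0)`), a point outside it.

For `K`, let `T = T((0, 1); K)` and `F = T ∩ {x₂ = 0}`, a face containing `(-1, 0, 0, 0)` and
`(-1, 1, 0, 0)`. The curve `(-1, -s, -s², 0)` in `T` makes `(0, -1, 0, 0)` tangent to `T` at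
`(-1, 0, 0, 0)`; this direction lies in `span F` but not in `T((-1, 0, 0, 0); F)`, whose elements
have `x₁ ≥ 0`.
-/

open Topology

theorem sqrt_mul_add_sqrt_mul_le {a b c d : ℝ} (ha : 0 ≤ a) (hb : 0 ≤ b) (hc : 0 ≤ c)
    (hd : 0 ≤ d) : √(a * b) + √(c * d) ≤ √((a + c) * (b + d)) := by
  have amgm : 2 * (√(a * b) * √(c * d)) ≤ a * d + c * b := by
    rw [← Real.sqrt_mul (by positivity), show a * b * (c * d) = (a * d) * (c * b) by ring,
      Real.sqrt_mul (by positivity)]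
    nlinarith [sq_nonneg (√(a * d) - √(c * b)), Real.sq_sqrt (mul_nonneg ha hd),
      Real.sq_sqrt (mul_nonneg hc hb)]
  apply Real.le_sqrt_of_sq_le
  nlinarith [Real.sq_sqrt (mul_nonneg ha hb), Real.sq_sqrt (mul_nonneg hc hd)]

theorem nonpos_of_forall_mul_add_mul_sq_nonpos {a b : ℝ}
    (h : ∀ s ∈ Ioc (0 : ℝ) 1, a * s + b * s ^ 2 ≤ 0) : a ≤ 0 := by
  have hcont : Continuous fun s : ℝ => a + b * s := by fun_prop
  have hlim : Tendsto (fun s => a + b * s) (𝓝[>] 0) (𝓝 a) := by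
    simpa using (hcont.tendsto 0).mono_left nhdsWithin_le_nhds
  refine le_of_tendsto hlim ?_
  filter_upwards [Ioc_mem_nhdsGT one_pos] with s hs
  have := h s hs
  nlinarith [hs.1]

/-- `(u, v, w)` lies in the closed convex cone spanned by the curve `(-1, -s, -s²)`, `s ≥ 0`, and
the ray `(0, 1, 0)`. -/
def InCurveCone (u v w : ℝ) : Prop := u ≤ 0 ∧ w ≤ 0 ∧ -√(u * w) ≤ v

namespace InCurveCone

variable {u v w u' v' w' : ℝ}

theorem add (h : InCurveCone u v w) (h' : InCurveCone u' v' w') :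
    InCurveCone (u + u') (v + v') (w + w') := by
  obtain ⟨hu, hw, hv⟩ := h
  obtain ⟨hu', hw', hv'⟩ := h'
  refine ⟨by linarith, by linarith, ?_⟩
  have := sqrt_mul_add_sqrt_mul_le (neg_nonneg.2 hu) (neg_nonneg.2 hw) (neg_nonneg.2 hu')
    (neg_nonneg.2 hw')
  simp only [neg_mul_neg, ← neg_add] at this
  linarith

theorem mul {c : ℝ} (hc : 0 ≤ c) (h : InCurveCone u v w) : InCurveCone (c * u) (c * v) (c * w) := by
  obtain ⟨hu, hw, hv⟩ := h
  refine ⟨mul_nonpos_of_nonneg_of_nonpos hc hu, mul_nonpos_of_nonneg_of_nonpos hc hw, ?_⟩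
  rw [show c * u * (c * w) = c ^ 2 * (u * w) by ring, Real.sqrt_mul (sq_nonneg c),
    Real.sqrt_sq hc]
  nlinarith

theorem nonneg_of_right_eq_zero (h : InCurveCone u v 0) : 0 ≤ v := by
  simpa using h.2.2

theorem zero : InCurveCone 0 0 0 := by simp [InCurveCone]

theorem moment {s : ℝ} (hs : 0 ≤ s) : InCurveCone (-1) (-s) (-s ^ 2) :=
  ⟨by norm_num, by nlinarith, by rw [neg_one_mul, neg_neg, Real.sqrt_sq hs]⟩

theorem ray {t : ℝ} (ht : 0 ≤ t) : InCurveCone (-1) t 0 :=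
  ⟨by norm_num, le_rfl, by simpa using ht⟩

end InCurveCone

theorem convex_setOf_inCurveCone {V : Type*} [AddCommGroup V] [Module ℝ V] (f g h : V →ᵃ[ℝ] ℝ) :
    Convex ℝ {x | InCurveCone (f x) (g x) (h x)} := by
  intro x hx y hy a b ha hb hab
  simp only [mem_ofPred_eq, Convex.combo_affine_apply hab, smul_eq_mul]
  exact (hx.mul ha).add (hy.mul hb)

theorem isClosed_setOf_inCurveCone {X : Type*} [TopologicalSpace X] {f g h : X → ℝ}
    (hf : Continuous f) (hg : Continuous g) (hh : Continuous h) :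
    IsClosed {x | InCurveCone (f x) (g x) (h x)} :=
  (isClosed_le hf continuous_const).inter ((isClosed_le hh continuous_const).inter
    (isClosed_le (hf.mul hh).sqrt.neg hg))

theorem isConeSet_setOf_inCurveCone (f g h : E →ₗ[ℝ] ℝ) :
    IsConeSet {x | InCurveCone (f x) (g x) (h x)} := fun c hc x hx => by
  simpa using hx.mul hc.le

section TangentCone

variable {x d : E} {C D K W : Set E}

def feasibleDirections (x : E) (C : Set E) : Set E := {d | ∃ ε : ℝ, 0 < ε ∧ x + ε • d ∈ C}

theorem IsConeSet.closure (hK : IsConeSet K) : IsConeSet (closure K) := fun c hc _ hx =>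
  map_mem_closure (continuous_const_smul c) hx fun y hy => hK c hc y hy

theorem isConeSet_feasibleDirections (x : E) (C : Set E) : IsConeSet (feasibleDirections x C) := by
  rintro c hc d ⟨ε, hε, hd⟩
  exact ⟨ε / c, div_pos hε hc, by rwa [smul_smul, div_mul_cancel₀ _ hc.ne']⟩

theorem Convex.feasibleDirections (hC : Convex ℝ C) (hx : x ∈ C) :
    Convex ℝ (feasibleDirections x C) := by
  rintro d₁ ⟨ε₁, hε₁, h₁⟩ d₂ ⟨ε₂, hε₂, h₂⟩ a b ha hb hab
  set ε := min ε₁ ε₂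
  have hε : 0 < ε := lt_min hε₁ hε₂
  have shrink : ∀ {d : E} {ε' : ℝ}, x + ε' • d ∈ C → ε ≤ ε' → x + ε • d ∈ C := by
    intro d ε' hd hle
    have hε' : 0 < ε' := hε.trans_le hle
    have := hC.add_smul_mem hx hd ⟨by positivity, (div_le_one hε').2 hle⟩
    rwa [smul_smul, div_mul_cancel₀ _ hε'.ne'] at this
  refine ⟨ε, hε, ?_⟩
  convert hC (shrink h₁ (min_le_left _ _)) (shrink h₂ (min_le_right _ _)) ha hb hab using 1
  rw [show x + ε • (a • d₁ + b • d₂) = (a + b) • x + ε • (a • d₁ + b • d₂) by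
    rw [hab, one_smul]]
  module

theorem Convex.tangCone (hC : Convex ℝ C) (hx : x ∈ C) : Convex ℝ (TangCone x C) :=
  (hC.feasibleDirections hx).closure

theorem mem_tangCone_of_add_smul_mem {ε : ℝ} (hε : 0 < ε) (h : x + ε • d ∈ C) :
    d ∈ TangCone x C :=
  subset_closure ⟨ε, hε, h⟩

theorem zero_mem_tangCone (hx : x ∈ C) : (0 : E) ∈ TangCone x C :=
  mem_tangCone_of_add_smul_mem one_pos (by simpa using hx)

theorem smul_mem_tangCone (hx : x ∈ C) {c : ℝ} (hc : 0 ≤ c) (hd : d ∈ TangCone x C) :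
    c • d ∈ TangCone x C := by
  rcases hc.eq_or_lt with rfl | hc
  · simpa using zero_mem_tangCone hx
  · exact (isConeSet_feasibleDirections x C).closure c hc d hd

theorem mem_tangCone_of_continuousWithinAt {c : ℝ → E} (hc : ContinuousWithinAt c (Ioi 0) 0)
    (h : ∀ᶠ s in 𝓝[>] 0, x + s • c s ∈ C) : c 0 ∈ TangCone x C :=
  mem_closure_of_tendsto hc <| by
    filter_upwards [h, self_mem_nhdsWithin] with s hs hs₀ using ⟨s, hs₀, hs⟩

theorem tangCone_subset_of_sub_mem (hWc : IsClosed W) (hW : IsConeSet W)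
    (h : ∀ y ∈ C, y - x ∈ W) : TangCone x C ⊆ W := by
  refine closure_minimal ?_ hWc
  rintro d ⟨ε, hε, hd⟩
  simpa [smul_smul, inv_mul_cancel₀ hε.ne'] using hW ε⁻¹ (inv_pos.2 hε) _ (h _ hd)

def coneOver (D : Set E) : Set E := {v | ∃ c : ℝ, 0 ≤ c ∧ ∃ p ∈ D, v = c • p}

theorem isConeSet_coneOver (D : Set E) : IsConeSet (coneOver D) := by
  rintro c hc _ ⟨c', hc', p, hp, rfl⟩
  exact ⟨c * c', by positivity, p, hp, smul_smul c c' p⟩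

theorem Convex.coneOver (hD : Convex ℝ D) : Convex ℝ (coneOver D) := by
  rintro _ ⟨c₁, hc₁, p₁, hp₁, rfl⟩ _ ⟨c₂, hc₂, p₂, hp₂, rfl⟩ a b ha hb -
  rcases (show (0 : ℝ) ≤ a * c₁ + b * c₂ by positivity).eq_or_lt with h | h
  · have h₁ : a * c₁ = 0 := by nlinarith [mul_nonneg ha hc₁, mul_nonneg hb hc₂]
    have h₂ : b * c₂ = 0 := by nlinarith [mul_nonneg ha hc₁, mul_nonneg hb hc₂]
    exact ⟨0, le_rfl, p₁, hp₁, by simp [smul_smul, h₁, h₂]⟩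
  · refine ⟨a * c₁ + b * c₂, h.le, (a * c₁ / (a * c₁ + b * c₂)) • p₁ +
      (b * c₂ / (a * c₁ + b * c₂)) • p₂,
      hD hp₁ hp₂ (by positivity) (by positivity) (by field_simp), ?_⟩
    rw [smul_add, smul_smul, smul_smul, smul_smul, smul_smul]
    congr 2 <;> field_simp

theorem closure_coneOver_subset (hWc : IsClosed W) (hW : IsConeSet W) (h₀ : (0 : E) ∈ W)
    (hD : D ⊆ W) : closure (coneOver D) ⊆ W := by
  refine closure_minimal ?_ hWc
  rintro _ ⟨c, hc, p, hp, rfl⟩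
  rcases hc.eq_or_lt with rfl | hc
  · simpa using h₀
  · exact hW c hc p (hD hp)

theorem tangCone_eq_closure_coneOver (hx : x ∈ C) (hCD : ∀ y ∈ C, y - x ∈ coneOver D)
    (hDC : D ⊆ TangCone x C) : TangCone x C = closure (coneOver D) := by
  refine (tangCone_subset_of_sub_mem isClosed_closure (isConeSet_coneOver D).closure
    fun y hy => subset_closure (hCD y hy)).antisymm (closure_minimal ?_ isClosed_closure)
  rintro _ ⟨c, hc, p, hp, rfl⟩
  exact smul_mem_tangCone hx hc (hDC hp)

end TangentCone

section Faces

variable {V : Type*} [AddCommGroup V] [Module ℝ V] {S : Set V} {C F G : Set E}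

theorem isExtreme_sep_eq_zero_of_nonpos (l : V →ₗ[ℝ] ℝ) (hl : ∀ x ∈ S, l x ≤ 0) :
    IsExtreme ℝ S {x ∈ S | l x = 0} := by
  refine ⟨sep_subset _ _, ?_⟩
  rintro y hy z hz _ ⟨-, hx⟩ ⟨a, b, ha, hb, -, rfl⟩
  simp only [map_add, map_smul, smul_eq_mul] at hx
  exact ⟨hy, by nlinarith [hl y hy, hl z hz]⟩

theorem isExtreme_sep_eq_zero_of_nonneg (l : V →ₗ[ℝ] ℝ) (hl : ∀ x ∈ S, 0 ≤ l x) :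
    IsExtreme ℝ S {x ∈ S | l x = 0} := by
  simpa using isExtreme_sep_eq_zero_of_nonpos (-l) (by simpa using hl)

theorem IsExtreme.isFaceOf (h : IsExtreme ℝ C F) (hF : Convex ℝ F) (hFc : IsClosed F) :
    IsFaceOf F C :=
  ⟨h.subset, hF, hFc, fun _ hx _ hy _ hz hxyz =>
    ⟨h.left_mem_of_mem_openSegment hy hz hx hxyz, h.right_mem_of_mem_openSegment hy hz hx hxyz⟩⟩

theorem IsFaceOf.isExtreme (h : IsFaceOf F C) : IsExtreme ℝ C F :=
  ⟨h.1, fun _ hy _ hz _ hx hxyz => (h.2.2.2 _ hx _ hy _ hz hxyz).1⟩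

theorem IsFaceOf.trans (hF : IsFaceOf F C) (hG : IsFaceOf G F) : IsFaceOf G C :=
  (hF.isExtreme.trans hG.isExtreme).isFaceOf hG.2.1 hG.2.2.1

theorem isFaceOf_sep_eq_zero_of_nonpos (hC : Convex ℝ C) (hCc : IsClosed C) (l : E →L[ℝ] ℝ)
    (hl : ∀ x ∈ C, l x ≤ 0) : IsFaceOf {x ∈ C | l x = 0} C :=
  (isExtreme_sep_eq_zero_of_nonpos (l : E →ₗ[ℝ] ℝ) hl).isFaceOf
    (hC.inter (convex_hyperplane l.toLinearMap.isLinear 0))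
    (hCc.inter (isClosed_eq l.continuous continuous_const))

theorem isFaceOf_sep_eq_zero_of_nonneg (hC : Convex ℝ C) (hCc : IsClosed C) (l : E →L[ℝ] ℝ)
    (hl : ∀ x ∈ C, 0 ≤ l x) : IsFaceOf {x ∈ C | l x = 0} C := by
  simpa using isFaceOf_sep_eq_zero_of_nonpos hC hCc (-l) (by simpa using hl)

theorem not_isExposedFaceOf_of_forall_inner_le {x y : E} (hx : x ∈ F) (hy : y ∈ C) (hyF : y ∉ F)
    (h : ∀ p : E, (∀ z ∈ C, ⟪p, z⟫ ≤ ⟪p, x⟫) → (∀ z ∈ F, ⟪p, z⟫ = ⟪p, x⟫) → ⟪p, x⟫ ≤ ⟪p, y⟫) :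
    ¬ IsExposedFaceOf F C := by
  rintro ⟨p, rfl⟩
  refine hyF ⟨hy, fun z hz => (hx.2 z hz).trans (h p hx.2 fun z hz' => ?_)⟩
  exact (hx.2 z hz'.1).antisymm (hz'.2 x hx.1)

end Faces

theorem one_le_tMax : (1 : ℝ) ≤ (2 + Real.sqrt 7) / 3 := by
  have : (1 : ℝ) ≤ Real.sqrt 7 := Real.one_le_sqrt.2 (by norm_num)
  linarith

theorem inner_v3 (p : EuclideanSpace ℝ (Fin 3)) (a b c : ℝ) :
    ⟪p, v3 a b c⟫ = p 0 * a + p 1 * b + p 2 * c := by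
  simp [v3, PiLp.inner_apply, Fin.sum_univ_three]
  ring

theorem inner_v2 (p : EuclideanSpace ℝ (Fin 2)) (a b : ℝ) : ⟪p, v2 a b⟫ = p 0 * a + p 1 * b := by
  simp [v2, PiLp.inner_apply, Fin.sum_univ_two]
  ring

def kappaHull : Set (EuclideanSpace ℝ (Fin 3)) :=
  convexHull ℝ (κ₁ '' Icc 0 1 ∪ κ₂ '' Icc 0 ((2 + Real.sqrt 7) / 3))

theorem convex_Tcone : Convex ℝ Tcone := (convex_convexHull ℝ _).coneOver.closure

theorem κ₁_mem_Tcone {s : ℝ} (hs : s ∈ Icc (0 : ℝ) 1) : κ₁ s ∈ Tcone :=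
  subset_closure ⟨1, zero_le_one, κ₁ s, subset_convexHull ℝ _ (.inl ⟨s, hs, rfl⟩),
    (one_smul ℝ _).symm⟩

theorem κ₂_mem_Tcone {t : ℝ} (ht : t ∈ Icc (0 : ℝ) ((2 + Real.sqrt 7) / 3)) : κ₂ t ∈ Tcone :=
  subset_closure ⟨1, zero_le_one, κ₂ t, subset_convexHull ℝ _ (.inr ⟨t, ht, rfl⟩),
    (one_smul ℝ _).symm⟩

theorem γ₁_mem_Cset {s : ℝ} (hs : s ∈ Icc (0 : ℝ) 1) : γ₁ s ∈ Cset :=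
  subset_convexHull ℝ _ (.inl ⟨s, hs, rfl⟩)

theorem γ₂_mem_Cset {t : ℝ} (ht : t ∈ Icc (0 : ℝ) ((2 + Real.sqrt 7) / 3)) : γ₂ t ∈ Cset :=
  subset_convexHull ℝ _ (.inr ⟨t, ht, rfl⟩)

theorem γ₁_eq_smul (s : ℝ) : γ₁ s = s • κ₁ s := by
  ext i; fin_cases i <;> simp [γ₁, κ₁, v3] <;> ring

theorem γ₂_eq_smul (t : ℝ) : γ₂ t = t • κ₂ t := by
  ext i; fin_cases i <;> simp [γ₂, κ₂, v3, sq]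

theorem zero_mem_Cset : (0 : EuclideanSpace ℝ (Fin 3)) ∈ Cset := by
  simpa [γ₁_eq_smul] using γ₁_mem_Cset ⟨le_rfl, zero_le_one⟩

theorem Cset_subset_coneOver : Cset ⊆ coneOver kappaHull := by
  refine convexHull_min ?_ (convex_convexHull ℝ _).coneOver
  rintro _ (⟨s, hs, rfl⟩ | ⟨t, ht, rfl⟩)
  · exact ⟨s, hs.1, κ₁ s, subset_convexHull ℝ _ (.inl ⟨s, hs, rfl⟩), γ₁_eq_smul s⟩
  · exact ⟨t, ht.1, κ₂ t, subset_convexHull ℝ _ (.inr ⟨t, ht, rfl⟩), γ₂_eq_smul t⟩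

theorem κ₁_zero_mem_tangCone : κ₁ 0 ∈ TangCone 0 Cset := by
  refine mem_tangCone_of_continuousWithinAt (by unfold κ₁ v3; fun_prop) ?_
  filter_upwards [Ioc_mem_nhdsGT one_pos] with s hs
  simpa [← γ₁_eq_smul] using γ₁_mem_Cset ⟨hs.1.le, hs.2⟩

theorem kappaHull_subset_tangCone : kappaHull ⊆ TangCone 0 Cset := by
  refine convexHull_min ?_ ((convex_convexHull ℝ _).tangCone zero_mem_Cset)
  rintro _ (⟨s, hs, rfl⟩ | ⟨t, ht, rfl⟩)
  · rcases hs.1.eq_or_lt with rfl | hs₀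
    · exact κ₁_zero_mem_tangCone
    · exact mem_tangCone_of_add_smul_mem hs₀ (by simpa [← γ₁_eq_smul] using γ₁_mem_Cset hs)
  · rcases ht.1.eq_or_lt with rfl | ht₀
    · convert κ₁_zero_mem_tangCone using 1
      ext i; fin_cases i <;> simp [κ₁, κ₂, v3]
    · exact mem_tangCone_of_add_smul_mem ht₀ (by simpa [← γ₂_eq_smul] using γ₂_mem_Cset ht)

theorem tangCone_zero_Cset : TangCone 0 Cset = Tcone :=
  tangCone_eq_closure_coneOver (D := kappaHull) zero_mem_Cset
    (fun y hy => by simpa using Cset_subset_coneOver hy) kappaHull_subset_tangCone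

theorem Cset_subset_Tcone : Cset ⊆ Tcone := fun _ hp => subset_closure (Cset_subset_coneOver hp)

theorem Tcone_subset_inCurveCone :
    Tcone ⊆ {p : EuclideanSpace ℝ (Fin 3) | InCurveCone (p 0) (p 1) (p 2)} := by
  refine closure_coneOver_subset
    (isClosed_setOf_inCurveCone (by fun_prop) (by fun_prop) (by fun_prop))
    (isConeSet_setOf_inCurveCone (E := EuclideanSpace ℝ (Fin 3))
      (EuclideanSpace.projₗ 0) (EuclideanSpace.projₗ 1) (EuclideanSpace.projₗ 2))
    InCurveCone.zero (convexHull_min ?_ (convex_setOf_inCurveCone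
      (EuclideanSpace.projₗ 0).toAffineMap (EuclideanSpace.projₗ 1).toAffineMap
      (EuclideanSpace.projₗ 2).toAffineMap))
  rintro _ (⟨s, hs, rfl⟩ | ⟨t, ht, rfl⟩)
  · simpa [κ₁, v3] using InCurveCone.moment hs.1
  · simpa [κ₂, v3] using InCurveCone.ray ht.1

/-- The ray spanned by `κ₁ 0 = (-1, 0, 0)`. -/
def rayFace : Set (EuclideanSpace ℝ (Fin 3)) := {x ∈ {x ∈ Tcone | x 2 = 0} | x 1 = 0}

theorem κ₁_zero_mem_rayFace : κ₁ 0 ∈ rayFace :=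
  ⟨⟨κ₁_mem_Tcone ⟨le_rfl, zero_le_one⟩, by simp [κ₁, v3]⟩, by simp [κ₁, v3]⟩

theorem zero_mem_rayFace : (0 : EuclideanSpace ℝ (Fin 3)) ∈ rayFace :=
  ⟨⟨Cset_subset_Tcone zero_mem_Cset, rfl⟩, rfl⟩

theorem isProperFaceOf_rayFace : IsProperFaceOf rayFace Tcone := by
  have hplane := isFaceOf_sep_eq_zero_of_nonpos convex_Tcone isClosed_closure
    (EuclideanSpace.proj 2) fun x hx => (Tcone_subset_inCurveCone hx).2.1
  have hray := isFaceOf_sep_eq_zero_of_nonneg hplane.2.1 hplane.2.2.1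
    (EuclideanSpace.proj 1) fun x hx => by
      have h₂ : x 2 = 0 := hx.2
      have : InCurveCone (x 0) (x 1) (x 2) := Tcone_subset_inCurveCone hx.1
      rw [h₂] at this
      exact this.nonneg_of_right_eq_zero
  refine ⟨hplane.trans hray, ⟨0, zero_mem_rayFace⟩, fun h => ?_⟩
  have := (h ▸ κ₂_mem_Tcone ⟨zero_le_one, one_le_tMax⟩ : κ₂ 1 ∈ rayFace).2
  simp [κ₂, v3] at this

theorem not_faciallyExposed_Tcone : ¬ FaciallyExposed Tcone := by
  intro h
  refine not_isExposedFaceOf_of_forall_inner_le zero_mem_rayFace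
    (κ₂_mem_Tcone ⟨zero_le_one, one_le_tMax⟩) (fun hy => by simpa [κ₂, v3] using hy.2) ?_
    (h _ isProperFaceOf_rayFace)
  intro p hmax hface
  have hp₀ : p 0 = 0 := by simpa [κ₁, inner_v3] using hface _ κ₁_zero_mem_rayFace
  have hp₁ : -p 1 ≤ 0 := nonpos_of_forall_mul_add_mul_sq_nonpos (b := -p 2) fun s hs => by
    have := hmax _ (κ₁_mem_Tcone ⟨hs.1.le, hs.2⟩)
    simp only [κ₁, inner_v3, hp₀, inner_zero_right] at this
    linarith
  simp only [κ₂, inner_v3, hp₀, inner_zero_right]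
  linarith

theorem v2_mem_Dslice_of_curve {s : ℝ} (hs : s ∈ Icc (0 : ℝ) 1) : v2 (-s) (-s ^ 2) ∈ Dslice :=
  subset_convexHull ℝ _ (.inl ⟨s, hs, rfl⟩)

theorem v2_mem_Dslice_of_ray {t : ℝ} (ht : t ∈ Icc (0 : ℝ) ((2 + Real.sqrt 7) / 3)) :
    v2 t 0 ∈ Dslice :=
  subset_convexHull ℝ _ (.inr ⟨t, ht, rfl⟩)

theorem Dslice_subset_inCurveCone :
    Dslice ⊆ {q : EuclideanSpace ℝ (Fin 2) | InCurveCone (-1) (q 0) (q 1)} := by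
  refine convexHull_min ?_ (convex_setOf_inCurveCone (AffineMap.const ℝ _ (-1))
    (EuclideanSpace.projₗ 0).toAffineMap (EuclideanSpace.projₗ 1).toAffineMap)
  rintro _ (⟨s, hs, rfl⟩ | ⟨t, ht, rfl⟩)
  · simpa [v2] using InCurveCone.moment hs.1
  · simpa [v2] using InCurveCone.ray ht.1

theorem isFaceOf_zero_Dslice : IsFaceOf {(0 : EuclideanSpace ℝ (Fin 2))} Dslice := by
  have hline := isExtreme_sep_eq_zero_of_nonpos (S := Dslice) (EuclideanSpace.projₗ 1)
    fun q hq => (Dslice_subset_inCurveCone hq).2.1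
  have hpoint := isExtreme_sep_eq_zero_of_nonneg (S := {q ∈ Dslice | q 1 = 0})
    (EuclideanSpace.projₗ 0) fun q hq => by
      have : InCurveCone (-1) (q 0) (q 1) := Dslice_subset_inCurveCone hq.1
      rw [hq.2] at this
      exact this.nonneg_of_right_eq_zero
  have hzero : {q ∈ {q ∈ Dslice | q 1 = 0} | q 0 = 0} = {0} := by
    ext q
    simp only [mem_sep_iff, mem_singleton_iff]
    constructor
    · rintro ⟨⟨-, h₁⟩, h₀⟩
      ext i; fin_cases i <;> simp [h₀, h₁]
    · rintro rfl
      refine ⟨⟨?_, rfl⟩, rfl⟩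
      convert v2_mem_Dslice_of_curve ⟨le_rfl, zero_le_one⟩ using 1
      ext i; fin_cases i <;> simp [v2]
  exact (hzero ▸ hline.trans hpoint).isFaceOf (convex_singleton 0) isClosed_singleton

theorem not_isExposedFaceOf_zero_Dslice :
    ¬ IsExposedFaceOf {(0 : EuclideanSpace ℝ (Fin 2))} Dslice := by
  refine not_isExposedFaceOf_of_forall_inner_le rfl (v2_mem_Dslice_of_ray
    ⟨zero_le_one, one_le_tMax⟩) (fun h => by simpa [v2] using congrArg (· 0) h) fun p hmax _ => ?_
  have hp₀ : -p 0 ≤ 0 := nonpos_of_forall_mul_add_mul_sq_nonpos (b := -p 1) fun s hs => by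
    have := hmax _ (v2_mem_Dslice_of_curve ⟨hs.1.le, hs.2⟩)
    simp only [inner_v2, inner_zero_right] at this
    linarith
  simp only [inner_v2, inner_zero_right]
  linarith

theorem Kcone_eq : Kcone = closure (coneOver (lift '' Cset)) := by
  simp [Kcone, coneOver]

theorem convex_lift_image {S : Set (EuclideanSpace ℝ (Fin 3))} (hS : Convex ℝ S) :
    Convex ℝ (lift '' S) := by
  rintro _ ⟨p, hp, rfl⟩ _ ⟨q, hq, rfl⟩ a b ha hb hab
  refine ⟨a • p + b • q, hS hp hq ha hb hab, ?_⟩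
  ext i; fin_cases i <;> simp [lift, v4, hab]

theorem convex_Kcone : Convex ℝ Kcone :=
  Kcone_eq ▸ (convex_lift_image (convex_convexHull ℝ _)).coneOver.closure

theorem lift_mem_Kcone {p : EuclideanSpace ℝ (Fin 3)} (hp : p ∈ Cset) : lift p ∈ Kcone :=
  subset_closure ⟨1, zero_le_one, p, hp, (one_smul ℝ _).symm⟩

theorem tangCone_lift_zero_Kcone_subset : TangCone (lift 0) Kcone ⊆
    {v : EuclideanSpace ℝ (Fin 4) | InCurveCone (v 0) (v 1) (v 2)} := by
  have hclosed : IsClosed {v : EuclideanSpace ℝ (Fin 4) | InCurveCone (v 0) (v 1) (v 2)} :=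
    isClosed_setOf_inCurveCone (by fun_prop) (by fun_prop) (by fun_prop)
  have hK : Kcone ⊆ {v | InCurveCone (v 0) (v 1) (v 2)} := by
    refine closure_minimal ?_ hclosed
    rintro _ ⟨c, hc, p, hp, rfl⟩
    have : InCurveCone (p 0) (p 1) (p 2) := Tcone_subset_inCurveCone (Cset_subset_Tcone hp)
    simpa [lift, v4] using this.mul hc
  refine tangCone_subset_of_sub_mem hclosed (isConeSet_setOf_inCurveCone
    (E := EuclideanSpace ℝ (Fin 4)) (EuclideanSpace.projₗ 0) (EuclideanSpace.projₗ 1)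
    (EuclideanSpace.projₗ 2)) fun y hy => ?_
  simpa [lift, v4] using hK hy

theorem curve_mem_tangCone_lift_zero_Kcone {s : ℝ} (hs : s ∈ Icc (0 : ℝ) 1) :
    v4 (-1) (-s) (-s ^ 2) 0 ∈ TangCone (lift 0) Kcone := by
  have hγ : ∀ s, lift 0 + s • v4 (-1) (-s) (-s ^ 2) 0 = lift (γ₁ s) := fun s => by
    ext i; fin_cases i <;> simp [lift, v4, γ₁, v3] <;> ring
  rcases hs.1.eq_or_lt with rfl | hs₀
  · refine mem_tangCone_of_continuousWithinAt (c := fun s => v4 (-1) (-s) (-s ^ 2) 0)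
      (by unfold v4; fun_prop) ?_
    filter_upwards [Ioc_mem_nhdsGT one_pos] with s hs
    exact hγ s ▸ lift_mem_Kcone (γ₁_mem_Cset ⟨hs.1.le, hs.2⟩)
  · exact mem_tangCone_of_add_smul_mem hs₀ (hγ s ▸ lift_mem_Kcone (γ₁_mem_Cset hs))

def flatFace : Set (EuclideanSpace ℝ (Fin 4)) := {v ∈ TangCone (lift 0) Kcone | v 2 = 0}

theorem isProperFaceOf_flatFace : IsProperFaceOf flatFace (TangCone (lift 0) Kcone) := by
  refine ⟨isFaceOf_sep_eq_zero_of_nonpos (convex_Kcone.tangCone (lift_mem_Kcone zero_mem_Cset))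
    isClosed_closure (EuclideanSpace.proj 2) fun v hv => (tangCone_lift_zero_Kcone_subset hv).2.1,
    ⟨0, zero_mem_tangCone (lift_mem_Kcone zero_mem_Cset), rfl⟩, fun h => ?_⟩
  have := (h ▸ curve_mem_tangCone_lift_zero_Kcone ⟨zero_le_one, le_rfl⟩ :
    v4 (-1) (-1) (-1 ^ 2) 0 ∈ flatFace).2
  simp [v4] at this

theorem v4_neg_one_zero_mem_flatFace : v4 (-1) 0 0 0 ∈ flatFace :=
  ⟨by simpa using curve_mem_tangCone_lift_zero_Kcone ⟨le_rfl, zero_le_one⟩, by simp [v4]⟩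

theorem v4_neg_one_one_mem_flatFace : v4 (-1) 1 0 0 ∈ flatFace := by
  refine ⟨mem_tangCone_of_add_smul_mem one_pos ?_, by simp [v4]⟩
  convert lift_mem_Kcone (γ₂_mem_Cset ⟨zero_le_one, one_le_tMax⟩) using 1
  ext i; fin_cases i <;> simp [lift, v4, γ₂, v3]

theorem mem_tangCone_tangCone_lift_zero_Kcone :
    v4 0 (-1) 0 0 ∈ TangCone (v4 (-1) 0 0 0) (TangCone (lift 0) Kcone) := by
  have := mem_tangCone_of_continuousWithinAt (x := v4 (-1) 0 0 0) (C := TangCone (lift 0) Kcone)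
    (c := fun s => v4 0 (-1) (-s) 0) (by unfold v4; fun_prop) ?_
  · simpa using this
  filter_upwards [Ioc_mem_nhdsGT one_pos] with s hs
  convert curve_mem_tangCone_lift_zero_Kcone ⟨hs.1.le, hs.2⟩ using 1
  ext i; fin_cases i <;> simp [v4, sq]

theorem mem_span_flatFace : v4 0 (-1) 0 0 ∈ Submodule.span ℝ flatFace := by
  convert Submodule.sub_mem _ (Submodule.subset_span v4_neg_one_zero_mem_flatFace)
    (Submodule.subset_span v4_neg_one_one_mem_flatFace) using 1
  ext i; fin_cases i <;> simp [v4]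

theorem notMem_tangCone_flatFace : v4 0 (-1) 0 0 ∉ TangCone (v4 (-1) 0 0 0) flatFace := by
  intro h
  have hsub : TangCone (v4 (-1) 0 0 0) flatFace ⊆ {d | 0 ≤ d 1} := by
    refine tangCone_subset_of_sub_mem (isClosed_le continuous_const (by fun_prop))
      (fun c hc d hd => by simpa using mul_nonneg hc.le hd) fun y hy => ?_
    have : InCurveCone (y 0) (y 1) (y 2) := tangCone_lift_zero_Kcone_subset hy.1
    rw [show y 2 = 0 from hy.2] at this
    simpa [v4] using this.nonneg_of_right_eq_zero
  have := hsub h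
  norm_num [v4] at this

theorem not_stronglyTangentiallyExposed_Kcone : ¬ StronglyTangentiallyExposed Kcone := by
  intro h
  have hT : TangCone (lift 0) Kcone ∈ TangIter Kcone 1 :=
    ⟨Kcone, rfl, lift 0, lift_mem_Kcone zero_mem_Cset, rfl⟩
  have heq := h 1 _ hT _ isProperFaceOf_flatFace _ v4_neg_one_zero_mem_flatFace
  exact notMem_tangCone_flatFace (heq ▸ ⟨mem_tangCone_tangCone_lift_zero_Kcone, mem_span_flatFace⟩)

/-- **Example.** The tangent cone to `K = cone(C × {1})` at the origin — which, read in the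
slice `C`, is `T(0;C) = cl cone{κ₁ ∪ κ₂}` — is not facially exposed: its two-dimensional
slice `Dslice` has `{(0,0)}` as an unexposed face. In particular `K` is not strongly
tangentially exposed. -/
theorem cubic_example_tangent_cone_not_facially_exposed :
    TangCone (0 : EuclideanSpace ℝ (Fin 3)) Cset = Tcone ∧
    ¬ FaciallyExposed Tcone ∧
    IsFaceOf {(0 : EuclideanSpace ℝ (Fin 2))} Dslice ∧
    ¬ IsExposedFaceOf {(0 : EuclideanSpace ℝ (Fin 2))} Dslice ∧
    ¬ StronglyTangentiallyExposed Kcone :=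
  ⟨tangCone_zero_Cset, not_faciallyExposed_Tcone, isFaceOf_zero_Dslice,
    not_isExposedFaceOf_zero_Dslice, not_stronglyTangentiallyExposed_Kcone⟩

end CubicExample
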